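/- Let (X,G) be a small Polish structure with X uncountable, and let H be a nontrivial countable group. Then there is no Polish topology on H(X) making H(X) a topological group such that the action of G on H(X), given by (g·y)(x) = y(g⁻¹x), is continuous. -/

import Mathlib

open Function

variable (X H : Type*)

/-- `H(X)`: the direct sum of copies of `H` indexed by `X`, realized as the subgroup of
the product group `X → H` consisting of finitely supported functions. -/
def FinSupp [Group H] : Subgroup (X → H) where
  carrier := {f | (Function.mulSupport f).Finite}
  one_mem' := by simp [Function.mulSupport_one]
  mul_mem' {f g} hf hg := (hf.union hg).subset (Function.mulSupport_mul f g)
  inv_mem' {f} hf := by simpa [Function.mulSupport_inv] using hf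

variable (G : Type*) [Group G] [Group H] [MulAction G X]

/-- The action of `G` on `H(X)` given by `(g • y) x = y (g⁻¹ • x)`. -/
instance : MulAction G ↥(FinSupp X H) where
  smul g y := ⟨fun x => (y : X → H) (g⁻¹ • x), by
    show (Function.mulSupport ((y : X → H) ∘ (fun x => g⁻¹ • x))).Finite
    rw [Function.mulSupport_comp_eq_preimage]
    exact y.2.preimage ((MulAction.injective (g⁻¹ : G)).injOn)⟩
  one_smul y := Subtype.ext <| funext fun x => by
    show (y : X → H) ((1 : G)⁻¹ • x) = (y : X → H) x
    rw [inv_one, one_smul]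
  mul_smul g₁ g₂ y := Subtype.ext <| funext fun x => by
    show (y : X → H) ((g₁ * g₂)⁻¹ • x) = (y : X → H) (g₂⁻¹ • g₁⁻¹ • x)
    rw [mul_inv_rev, mul_smul]

lemma smul_finSupp_apply (g : G) (y : ↥(FinSupp X H)) (x : X) :
    ((g • y : ↥(FinSupp X H)) : X → H) x = (y : X → H) (g⁻¹ • x) := rfl

/-!
Suppose `H(X)` carried such a topology. Since `H` is countable, an element of `H(X)` is
determined up to the `G`-action by the orbit of a tuple enumerating its support together with
its values there, so smallness gives only countably many `G`-orbits on `H(X)`. Each orbit is a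
continuous image of `G`, hence analytic, and as the orbits partition `H(X)` into countably many
analytic sets, each one is Borel. By the Baire category theorem some orbit `O` is non-meagre, and
Pettis's theorem makes `O * O⁻¹` a neighbourhood of `1`. All elements of `O` have the same
support size `k`, so every element of this neighbourhood has support of size at most `2k`.

On the other hand, in a separable group topology on the uncountable group `H(X)` every
neighbourhood of `1` is uncountable, while restricting to a finite set `F ⊆ X` maps `H(X)` onto
the countable group `H^F`; hence each neighbourhood of `1` contains a nontrivial element that is
trivial on `F`. Multiplying such elements with disjoint supports produces elements of arbitrarily
large support in any neighbourhood of `1`.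
-/

open MulAction Set Topology Pointwise Filter

section TopologicalGroup

variable {Y : Type*} [TopologicalSpace Y] [Group Y] [IsTopologicalGroup Y]

theorem IsOpen.not_countable [TopologicalSpace.SeparableSpace Y] [Uncountable Y] {U : Set Y}
    (hU : IsOpen U) (hne : U.Nonempty) : ¬ U.Countable := by
  intro hUc
  obtain ⟨D, hDc, hD⟩ := TopologicalSpace.exists_countable_dense Y
  have hcover : D * U = univ := by rw [← hU.closure_mul, hD.closure_eq, univ_mul hne]
  have hcountable : (D * U).Countable := by
    rw [← image2_mul]
    exact hDc.image2 hUc _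
  exact not_countable_univ (hcover ▸ hcountable)

theorem not_countable_of_mem_nhds [TopologicalSpace.SeparableSpace Y] [Uncountable Y] {V : Set Y}
    {y : Y} (hV : V ∈ 𝓝 y) : ¬ V.Countable := fun hVc =>
  isOpen_interior.not_countable ⟨y, mem_interior_iff_mem_nhds.mpr hV⟩
    (hVc.mono interior_subset)

theorem MonoidHom.exists_ne_one_mem_ker_of_mem_nhds_one [TopologicalSpace.SeparableSpace Y]
    [Uncountable Y] {C : Type*} [Group C] [Countable C] (f : Y →* C) {V : Set Y}
    (hV : V ∈ 𝓝 1) : ∃ u ∈ V, u ≠ 1 ∧ f u = 1 := by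
  obtain ⟨W, hW, hWV⟩ := exists_nhds_split_inv hV
  have hnotinj : ¬ InjOn f W := fun hinj =>
    not_countable_of_mem_nhds hW ((mapsTo_univ f W).countable_of_injOn hinj countable_univ)
  obtain ⟨a, ha, b, hb, hfab, hab⟩ : ∃ a ∈ W, ∃ b ∈ W, f a = f b ∧ a ≠ b := by
    simpa [InjOn] using hnotinj
  exact ⟨a / b, hWV a ha b hb, div_ne_one.mpr hab, by rw [map_div, hfab, div_self']⟩

theorem BaireMeasurableSet.mul_inv_mem_nhds_one [BaireSpace Y] {S : Set Y}
    (hS : BaireMeasurableSet S) (hS' : ¬ IsMeagre S) : S * S⁻¹ ∈ 𝓝 1 := by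
  obtain ⟨U, hU, hSU⟩ := hS.residualEq_isOpen
  obtain ⟨u, hu⟩ : U.Nonempty := by
    rw [nonempty_iff_ne_empty]
    rintro rfl
    exact hS' (eventuallyEq_empty.mp hSU)
  refine mem_of_superset
    (hU.mul_right.mem_nhds ⟨u, hu, u⁻¹, inv_mem_inv.mpr hu, mul_inv_cancel u⟩) ?_
  rintro w ⟨a, ha, b, hb, rfl⟩
  -- Otherwise `U ∩ (a * b) • U`, a nonempty open set, is residually equal to the empty set
  -- `S ∩ (a * b) • S`.
  by_contra hw
  have hempty : S ∩ (fun z => (a * b)⁻¹ * z) ⁻¹' S = ∅ := by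
    refine eq_empty_iff_forall_notMem.mpr fun z ⟨hz, hz'⟩ => ?_
    exact hw ⟨z, hz, _, inv_mem_inv.mpr hz', by group⟩
  have htranslate :
      (fun z => (a * b)⁻¹ * z) ⁻¹' S =ᵇ (fun z => (a * b)⁻¹ * z) ⁻¹' U :=
    hSU.comp_tendsto (tendsto_residual_of_isOpenMap (continuous_const_mul _)
      (isOpenMap_mul_left _))
  have hmeagre : IsMeagre (U ∩ (fun z => (a * b)⁻¹ * z) ⁻¹' U) :=
    eventuallyEq_empty.mp ((hSU.inter htranslate).symm.trans (hempty ▸ EventuallyEq.rfl))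
  refine not_isMeagre_of_isOpen (hU.inter (hU.preimage (continuous_const_mul _))) ⟨a, ha, ?_⟩
    hmeagre
  simpa using hb

end TopologicalGroup

section Orbits

variable {Γ Y : Type*} [Group Γ] [MulAction Γ Y] [TopologicalSpace Y]

theorem MulAction.baireMeasurableSet_orbit [TopologicalSpace Γ] [PolishSpace Γ] [T2Space Y]
    [ContinuousSMul Γ Y] [Countable (orbitRel.Quotient Γ Y)] (y : Y) :
    BaireMeasurableSet (orbit Γ y) := by
  borelize Y
  have hanalytic (c : orbitRel.Quotient Γ Y) : MeasureTheory.AnalyticSet c.orbit := by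
    induction c using Quotient.inductionOn with
    | h z =>
      exact MeasureTheory.analyticSet_range_of_polishSpace (continuous_id.smul continuous_const)
  have hcompl : (orbitRel.Quotient.orbit (⟦y⟧ : orbitRel.Quotient Γ Y))ᶜ
      = ⋃ c : {c : orbitRel.Quotient Γ Y // c ≠ ⟦y⟧}, c.1.orbit := by
    ext z
    simp [orbitRel.Quotient.mem_orbit, -orbitRel.Quotient.orbit_mk]
  refine MeasurableSet.baireMeasurableSet ((hanalytic ⟦y⟧).measurableSet_of_compl ?_)
  rw [hcompl]
  exact .iUnion fun c => hanalytic c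

theorem MulAction.exists_not_isMeagre_orbit [BaireSpace Y] [Nonempty Y]
    [Countable (orbitRel.Quotient Γ Y)] : ∃ y : Y, ¬ IsMeagre (orbit Γ y) := by
  by_contra! h
  refine not_isMeagre_of_isOpen (isOpen_univ (X := Y)) univ_nonempty ?_
  rw [univ_eq_iUnion_orbit Γ]
  exact isMeagre_iUnion fun c => c.inductionOn h

end Orbits

theorem Function.extend_equiv_comp {α β β' γ : Type*} (σ : β ≃ β') (f : α → β)
    (g : α → γ) (e : β' → γ) : extend (σ ∘ f) g e = extend f g (e ∘ σ) ∘ σ.symm := by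
  ext b'
  have hpred : (fun a => (σ ∘ f) a = b') = (fun a => f a = σ.symm b') :=
    funext fun _ => propext σ.eq_symm_apply.symm
  unfold extend
  rw [hpred]
  simp only [comp_apply, σ.apply_symm_apply]

theorem Function.extend_comp_eq_of_mulSupport_subset_range {α β γ : Type*} [One γ]
    {f : α → β} {y : β → γ} (hy : mulSupport y ⊆ range f) : extend f (y ∘ f) 1 = y := by
  ext b
  by_cases hb : ∃ a, f a = b
  · obtain ⟨a, rfl⟩ := hb
    exact FactorsThrough.extend_apply (fun _ _ h => congrArg y h) 1 a
  · rw [extend_apply' _ _ _ hb]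
    exact (notMem_mulSupport.mp fun hyb => hb (hy hyb)).symm

theorem Function.mulSupport_mul_of_disjoint {α M : Type*} [MulOneClass M] {f g : α → M}
    (h : Disjoint (mulSupport f) (mulSupport g)) :
    mulSupport (f * g) = mulSupport f ∪ mulSupport g := by
  refine (mulSupport_mul f g).antisymm ?_
  rintro x (hx | hx)
  · have hgx : g x = 1 := notMem_mulSupport.mp (h.notMem_of_mem_left hx)
    simpa [hgx] using hx
  · have hfx : f x = 1 := notMem_mulSupport.mp (h.notMem_of_mem_right hx)
    simpa [hfx] using hx

namespace FinSupp

variable {X H G}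

theorem mulSupport_finite (y : FinSupp X H) : (mulSupport (y : X → H)).Finite := y.2

theorem mulSupport_smul (g : G) (y : FinSupp X H) :
    mulSupport ((g • y : FinSupp X H) : X → H) = g • mulSupport (y : X → H) := by
  ext x
  simp [mem_smul_set_iff_inv_smul_mem, smul_finSupp_apply]

theorem ncard_mulSupport_smul (g : G) (y : FinSupp X H) :
    (mulSupport ((g • y : FinSupp X H) : X → H)).ncard = (mulSupport (y : X → H)).ncard := by
  rw [mulSupport_smul, ncard_smul_set]

theorem extend_mem {m : ℕ} (v : Fin m → X) (l : Fin m → H) : extend v l 1 ∈ FinSupp X H :=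
  (finite_range v).subset <|
    mulSupport_extend_one_subset.trans (image_subset_range _ _)

theorem smul_extend {m : ℕ} (g : G) (v : Fin m → X) (l : Fin m → H) :
    g • (⟨extend v l 1, extend_mem v l⟩ : FinSupp X H)
      = ⟨extend (g • v) l 1, extend_mem (g • v) l⟩ := by
  ext x
  rw [smul_finSupp_apply]
  exact (congrFun (extend_equiv_comp (MulAction.toPerm g) v l 1) x).symm

theorem countable_orbitRel_quotient [Countable H]
    (hsmall : ∀ n : ℕ, Countable (orbitRel.Quotient G (Fin n → X))) :
    Countable (orbitRel.Quotient G (FinSupp X H)) := by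
  let orbitOf (p : Σ m : ℕ, (Fin m → H) × orbitRel.Quotient G (Fin m → X)) :
      orbitRel.Quotient G (FinSupp X H) :=
    Quotient.map (sa := orbitRel G _) (sb := orbitRel G (FinSupp X H))
      (fun v => ⟨extend v p.2.1 1, extend_mem v p.2.1⟩)
      (fun _ _ ⟨g, hg⟩ => ⟨g, by subst hg; exact smul_extend g _ _⟩) p.2.2
  refine Function.Surjective.countable (f := orbitOf) ?_
  rintro ⟨y⟩
  obtain ⟨m, v, hv⟩ := (mulSupport_finite y).fin_embedding
  refine ⟨⟨m, (y : X → H) ∘ v, ⟦v⟧⟩, congrArg _ (Subtype.ext ?_)⟩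
  exact extend_comp_eq_of_mulSupport_subset_range hv.ge

instance [Uncountable X] [Nontrivial H] : Uncountable (FinSupp X H) := by
  classical
  obtain ⟨h, hh⟩ := exists_ne (1 : H)
  let single (x : X) : FinSupp X H :=
    ⟨Pi.mulSingle x h, (finite_singleton x).subset Pi.mulSupport_mulSingle_subset⟩
  have hinj : Injective single := fun x x' hxx' => by
    simpa [single, Pi.mulSupport_mulSingle_of_ne hh] using
      congrArg (fun y : FinSupp X H => mulSupport (y : X → H)) hxx'
  exact hinj.uncountable

theorem ncard_mulSupport_mul_inv_le (a b : FinSupp X H) :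
    (mulSupport ((a * b⁻¹ : FinSupp X H) : X → H)).ncard
      ≤ (mulSupport (a : X → H)).ncard + (mulSupport (b : X → H)).ncard := by
  calc _ ≤ (mulSupport (a : X → H) ∪ mulSupport (b : X → H)).ncard := by
        refine ncard_le_ncard ?_ ((mulSupport_finite a).union (mulSupport_finite b))
        simpa [mulSupport_inv] using mulSupport_mul (a : X → H) (b : X → H)⁻¹
    _ ≤ _ := ncard_union_le _ _

theorem ncard_mulSupport_le_of_mem_orbit_mul_inv {y w : FinSupp X H}
    (hw : w ∈ orbit G y * (orbit G y)⁻¹) :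
    (mulSupport (w : X → H)).ncard ≤ 2 * (mulSupport (y : X → H)).ncard := by
  obtain ⟨_, ⟨g, rfl⟩, b, ⟨g', hg'⟩, rfl⟩ := hw
  have hle := ncard_mulSupport_mul_inv_le (g • y) b⁻¹
  rw [inv_inv, ← hg', ncard_mulSupport_smul, ncard_mulSupport_smul] at hle
  exact hle.trans_eq (two_mul _).symm

section Topology

variable [TopologicalSpace (FinSupp X H)] [IsTopologicalGroup (FinSupp X H)]
  [TopologicalSpace.SeparableSpace (FinSupp X H)] [Uncountable X] [Nontrivial H] [Countable H]

theorem exists_ne_one_mem_nhds_disjoint_mulSupport {V : Set (FinSupp X H)} (hV : V ∈ 𝓝 1)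
    {F : Set X} (hF : F.Finite) :
    ∃ u ∈ V, u ≠ 1 ∧ Disjoint F (mulSupport (u : X → H)) := by
  have : Finite F := hF.to_subtype
  let restrict : FinSupp X H →* (F → H) :=
    (MonoidHom.pi fun x : F => Pi.evalMonoidHom (fun _ => H) (x : X)).comp (FinSupp X H).subtype
  obtain ⟨u, huV, hu1, hu⟩ := restrict.exists_ne_one_mem_ker_of_mem_nhds_one hV
  exact ⟨u, huV, hu1, disjoint_mulSupport_iff.mpr fun x hx => congrFun hu ⟨x, hx⟩⟩

theorem exists_mem_nhds_le_ncard_mulSupport (n : ℕ) {W : Set (FinSupp X H)}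
    (hW : W ∈ 𝓝 1) {F : Set X} (hF : F.Finite) :
    ∃ w ∈ W, Disjoint F (mulSupport (w : X → H)) ∧
      n ≤ (mulSupport (w : X → H)).ncard := by
  induction n generalizing W F with
  | zero => exact ⟨1, mem_of_mem_nhds hW, by simp, Nat.zero_le _⟩
  | succ n ih =>
    obtain ⟨U, hU, hUW⟩ := exists_nhds_one_split hW
    obtain ⟨u, huU, hu1, hFu⟩ := exists_ne_one_mem_nhds_disjoint_mulSupport hU hF
    obtain ⟨v, hvU, hFuv, hn⟩ := ih hU (hF.union (mulSupport_finite u))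
    have huv : Disjoint (mulSupport (u : X → H)) (mulSupport (v : X → H)) :=
      hFuv.mono_left subset_union_right
    have hsupp : mulSupport ((u * v : FinSupp X H) : X → H)
        = mulSupport (u : X → H) ∪ mulSupport (v : X → H) :=
      mulSupport_mul_of_disjoint huv
    have hu : 1 ≤ (mulSupport (u : X → H)).ncard := by
      refine (ncard_pos (mulSupport_finite u)).mpr (mulSupport_nonempty_iff.mpr ?_)
      exact fun h => hu1 (Subtype.ext h)
    refine ⟨u * v, hUW u huU v hvU, ?_, ?_⟩
    · rw [hsupp]
      exact disjoint_union_right.mpr ⟨hFu, hFuv.mono_left subset_union_left⟩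
    · rw [hsupp, ncard_union_eq huv (mulSupport_finite u) (mulSupport_finite v)]
      omega

end Topology

end FinSupp

theorem statement6 [TopologicalSpace G] [PolishSpace G]
    (hsmall : ∀ n : ℕ, Countable (Quotient (MulAction.orbitRel G (Fin n → X))))
    [Uncountable X] [Countable H] [Nontrivial H] :
    ¬ ∃ t : TopologicalSpace ↥(FinSupp X H),
        @PolishSpace ↥(FinSupp X H) t ∧
        @IsTopologicalGroup ↥(FinSupp X H) t _ ∧
        @Continuous (G × ↥(FinSupp X H)) ↥(FinSupp X H)
          (@instTopologicalSpaceProd G ↥(FinSupp X H) _ t) t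
          (fun p => p.1 • p.2) := by
  rintro ⟨t, _, _, hcont⟩
  have : ContinuousSMul G (FinSupp X H) := ⟨hcont⟩
  have := FinSupp.countable_orbitRel_quotient (H := H) hsmall
  obtain ⟨y, hy⟩ := exists_not_isMeagre_orbit (Γ := G) (Y := FinSupp X H)
  have hW := (baireMeasurableSet_orbit y).mul_inv_mem_nhds_one hy
  obtain ⟨w, hwW, -, hw⟩ :=
    FinSupp.exists_mem_nhds_le_ncard_mulSupport (2 * (mulSupport (y : X → H)).ncard + 1) hW
      finite_empty
  have := FinSupp.ncard_mulSupport_le_of_mem_orbit_mul_inv hwW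
  omega
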